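/- arXiv:2504.07412 — 2 statements merged into one kernel-verified Lean document; each statement's English description precedes it below -/
import Mathlib

section
/- Let R be a commutative ring containing invertible elements P_1, …, P_n and elements Q_1, …, Q_{n-1} and y, with the conventions P_0 = 1 and Q_0 = 0. Define the Toda polynomials T^{(m)}_k = Σ_{0 = i_0 < i_1 < ⋯ < i_k ≤ m} ∏_{s=1}^{k} (P_{i_s}/P_{i_s − 1}) · (1 − Q_{i_s − 1})^{1 − δ_{i_s − i_{s-1}, 1}} for 1 ≤ k ≤ m, T^{(m)}_0 = 1, and set T^{(m)}(y) = Σ_{k=0}^{m} T^{(m)}_k y^k. Then T^{(n)}(y) equals the tridiagonal determinant D(1 + y·P_1/P_0, 1 + y·P_2/P_1, …, 1 + y·P_n/P_{n-1}; y·(P_2/P_1)·Q_1, y·(P_3/P_2)·Q_2, …, y·(P_n/P_{n-1})·Q_{n-1}). -/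
open Finset
open scoped Classical

/-- The tridiagonal determinant `D(A_0, …, A_{m-1}; B_1, …, B_{m-1})` of size `m`:
the determinant of the `m × m` matrix whose diagonal entries are `A 0, …, A (m-1)`,
whose superdiagonal entry in position `(i, i+1)` is `B (i+1)`, whose subdiagonal
entries all equal `1`, and all of whose other entries are `0`. -/
noncomputable def triDet {R : Type*} [CommRing R] (m : ℕ) (A B : ℕ → R) : R :=
  Matrix.det (Matrix.of fun i j : Fin m =>
    if (i : ℕ) = (j : ℕ) then A i
    else if (i : ℕ) + 1 = (j : ℕ) then B j
    else if (j : ℕ) + 1 = (i : ℕ) then 1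
    else 0)

/-- The summand of the Toda polynomial `T^{(m)}_k` associated to a strictly
increasing sequence `0 = i_0 < i_1 < ⋯ < i_k ≤ m` (encoded as a strictly
monotone function `f : Fin (k+1) → Fin (m+1)` with `f 0 = 0`). -/
noncomputable def todaTerm {R : Type*} [CommRing R] (P : ℕ → Rˣ) (Q : ℕ → R)
    {m k : ℕ} (f : Fin (k + 1) → Fin (m + 1)) : R :=
  ∏ s : Fin k,
    (((P (f s.succ) * (P ((f s.succ : ℕ) - 1))⁻¹ : Rˣ) : R) *
      (if (f s.succ : ℕ) - (f s.castSucc : ℕ) = 1 then 1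
       else 1 - Q ((f s.succ : ℕ) - 1)))

/-- The Toda polynomial
`T^{(m)}_k = Σ_{0 = i_0 < i_1 < ⋯ < i_k ≤ m} ∏_{s=1}^{k}
  (P_{i_s}/P_{i_s - 1}) · (1 - Q_{i_s - 1})^{1 - δ_{i_s - i_{s-1}, 1}}`,
with `T^{(m)}_0 = 1`. -/
noncomputable def todaT {R : Type*} [CommRing R] (P : ℕ → Rˣ) (Q : ℕ → R)
    (m k : ℕ) : R :=
  ∑ f ∈ Finset.univ.filter
      (fun f : Fin (k + 1) → Fin (m + 1) => StrictMono f ∧ f 0 = 0),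
    todaTerm P Q f

/-- `T^{(m)}(y) = Σ_{k=0}^{m} T^{(m)}_k y^k`. -/
noncomputable def todaPoly {R : Type*} [CommRing R] (P : ℕ → Rˣ) (Q : ℕ → R)
    (m : ℕ) (y : R) : R :=
  ∑ k ∈ Finset.range (m + 1), todaT P Q m k * y ^ k


/-!
Encode `0 = i_0 < i_1 < ⋯ < i_k ≤ m` by the set `S = {i_1, …, i_k} ⊆ {1, …, m}`; then
`T^{(m)}(y)` is the sum over all such `S` of a product with one factor per element of `S`.
Splitting this sum according to whether `m + 2 ∈ S`, and then whether `m + 1 ∈ S`, gives the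
three-term recurrence `T^{(m+2)}(y) = A_{m+1} T^{(m+1)}(y) - B_{m+1} T^{(m)}(y)` with the
diagonal and superdiagonal entries `A`, `B` of the determinant. Expanding the tridiagonal
determinant along its last row gives the same recurrence, and both sides agree for `m = 0, 1`.
-/
namespace Matrix

variable {R : Type*} [CommRing R]

theorem det_succ_of_col_last_eq_zero {n : ℕ} (M : Matrix (Fin (n + 1)) (Fin (n + 1)) R)
    (h : ∀ i : Fin n, M i.castSucc (Fin.last n) = 0) :
    M.det = M (Fin.last n) (Fin.last n) * (M.submatrix Fin.castSucc Fin.castSucc).det := by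
  rw [det_succ_column M (Fin.last n), Fin.sum_univ_castSucc]
  simp [h, Fin.succAbove_last, ← two_mul, pow_mul]

end Matrix

section Tridiagonal

variable {R : Type*} [CommRing R]

def triMat (m : ℕ) (A B : ℕ → R) : Matrix (Fin m) (Fin m) R :=
  Matrix.of fun i j : Fin m =>
    if (i : ℕ) = (j : ℕ) then A i
    else if (i : ℕ) + 1 = (j : ℕ) then B j
    else if (j : ℕ) + 1 = (i : ℕ) then 1
    else 0

theorem triDet_eq_det_triMat (m : ℕ) (A B : ℕ → R) : triDet m A B = (triMat m A B).det := rfl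

variable {m : ℕ} {A B : ℕ → R}

theorem triMat_apply_self (i : Fin m) : triMat m A B i i = A i := by
  simp [triMat]

theorem triMat_apply_succ {i j : Fin m} (h : (i : ℕ) + 1 = j) : triMat m A B i j = B j := by
  rw [triMat, Matrix.of_apply, if_neg (by omega), if_pos h]

theorem triMat_apply_pred {i j : Fin m} (h : (j : ℕ) + 1 = i) : triMat m A B i j = 1 := by
  rw [triMat, Matrix.of_apply, if_neg (by omega), if_neg (by omega), if_pos h]

theorem triMat_apply_eq_zero {i j : Fin m} (h : (i : ℕ) + 1 < j ∨ (j : ℕ) + 1 < i) :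
    triMat m A B i j = 0 := by
  rw [triMat, Matrix.of_apply, if_neg (by omega), if_neg (by omega), if_neg (by omega)]

theorem triMat_submatrix {k : ℕ} {r c : Fin k → Fin m} (hr : ∀ i, (r i : ℕ) = i)
    (hc : ∀ j, (c j : ℕ) = j) : (triMat m A B).submatrix r c = triMat k A B := by
  ext i j
  simp [triMat, hr, hc]

theorem triDet_zero (A B : ℕ → R) : triDet 0 A B = 1 := Matrix.det_fin_zero

theorem triDet_one (A B : ℕ → R) : triDet 1 A B = A 0 := by
  simp [triDet]

theorem triDet_add_two (m : ℕ) (A B : ℕ → R) :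
    triDet (m + 2) A B = A (m + 1) * triDet (m + 1) A B - B (m + 1) * triDet m A B := by
  -- deleting the last row and the next-to-last column leaves a matrix whose last column
  -- is `B (m + 1)` times the last basis vector
  have hminor : ((triMat (m + 2) A B).submatrix (Fin.last (m + 1)).succAbove
      (Fin.last m).castSucc.succAbove).det = B (m + 1) * triDet m A B := by
    rw [Matrix.det_succ_of_col_last_eq_zero, Matrix.submatrix_submatrix,
      triMat_submatrix (k := m), Matrix.submatrix_apply, triMat_apply_succ (by simp),
      triDet_eq_det_triMat]
    · simp
    · simp
    · simp [Fin.succAbove_of_castSucc_lt]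
    · intro i
      exact triMat_apply_eq_zero (by simp [Fin.succAbove_of_castSucc_lt])
  have hrow (j : Fin m) : triMat (m + 2) A B (Fin.last (m + 1)) j.castSucc.castSucc = 0 :=
    triMat_apply_eq_zero (by simp)
  rw [triDet_eq_det_triMat, Matrix.det_succ_row _ (Fin.last (m + 1)), Fin.sum_univ_castSucc,
    Fin.sum_univ_castSucc, Finset.sum_eq_zero fun j _ => by rw [hrow, mul_zero, zero_mul],
    zero_add, hminor, triMat_apply_pred (by simp), triMat_apply_self, Fin.succAbove_last,
    triMat_submatrix (k := m + 1) (by simp) (by simp), ← triDet_eq_det_triMat]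
  have hodd : Odd (m + 1 + m) := ⟨m, by ring⟩
  have heven : Even (m + 1 + (m + 1)) := ⟨m + 1, rfl⟩
  simp only [Fin.val_last, Fin.val_castSucc, hodd.neg_one_pow, heven.neg_one_pow]
  ring

end Tridiagonal

section Subsets

variable {m k : ℕ}

def tailSet (f : Fin (k + 1) → Fin (m + 1)) : Finset ℕ :=
  univ.image fun t : Fin k => (f t.succ : ℕ)

theorem insert_zero_tailSet {f : Fin (k + 1) → Fin (m + 1)} (h0 : f 0 = 0) :
    insert 0 (tailSet f) = univ.image fun i => (f i : ℕ) := by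
  ext x
  simp [tailSet, Fin.exists_fin_succ, h0, eq_comm]

theorem tailSet_subset_Icc {f : Fin (k + 1) → Fin (m + 1)} (hf : StrictMono f) (h0 : f 0 = 0) :
    tailSet f ⊆ Icc 1 m := by
  intro x hx
  obtain ⟨t, -, rfl⟩ := mem_image.mp hx
  have hpos : f 0 < f t.succ := hf t.succ_pos
  rw [h0] at hpos
  exact mem_Icc.mpr ⟨hpos, Nat.lt_succ_iff.mp (f t.succ).isLt⟩

theorem card_tailSet {f : Fin (k + 1) → Fin (m + 1)} (hf : StrictMono f) :
    (tailSet f).card = k := by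
  rw [tailSet, card_image_of_injective _ fun a b h =>
    Fin.succ_injective k (hf.injective (Fin.ext h)), card_univ, Fintype.card_fin]

theorem tailSet_injOn :
    Set.InjOn tailSet {f : Fin (k + 1) → Fin (m + 1) | StrictMono f ∧ f 0 = 0} := by
  rintro f ⟨hf, hf0⟩ g ⟨hg, hg0⟩ hfg
  have himage : univ.image (fun i => (f i : ℕ)) = univ.image (fun i => (g i : ℕ)) := by
    rw [← insert_zero_tailSet hf0, ← insert_zero_tailSet hg0, hfg]
  have hrange : Set.range (fun i => (f i : ℕ)) = Set.range (fun i => (g i : ℕ)) := by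
    simpa using congrArg (fun s : Finset ℕ => (s : Set ℕ)) himage
  funext i
  exact Fin.ext (congrFun (((Fin.val_strictMono.comp hf).range_inj
    (Fin.val_strictMono.comp hg)).mp hrange) i)

theorem exists_tailSet_eq {S : Finset ℕ} (hS : S ⊆ Icc 1 m) (hk : S.card = k) :
    ∃ f : Fin (k + 1) → Fin (m + 1), (StrictMono f ∧ f 0 = 0) ∧ tailSet f = S := by
  have h0S : 0 ∉ S := fun h => by simpa using hS h
  have hcard : (insert 0 S).card = k + 1 := by rw [card_insert_of_notMem h0S, hk]
  set e := (insert 0 S).orderEmbOfFin hcard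
  have he_le (i : Fin (k + 1)) : e i < m + 1 := by
    rcases mem_insert.mp (orderEmbOfFin_mem (insert 0 S) hcard i) with h | h
    · rw [h]
      exact m.succ_pos
    · exact Nat.lt_succ_of_le (mem_Icc.mp (hS h)).2
  have he0 : e 0 = 0 :=
    (orderEmbOfFin_zero hcard k.succ_pos).trans
      (Nat.eq_zero_of_le_zero (min'_le _ 0 (mem_insert_self 0 S)))
  set f : Fin (k + 1) → Fin (m + 1) := fun i => ⟨e i, he_le i⟩
  have hf : StrictMono f := fun a b hab => e.strictMono hab
  have hf0 : f 0 = 0 := Fin.ext he0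
  have h0f : 0 ∉ tailSet f := fun h => by simpa using tailSet_subset_Icc hf hf0 h
  refine ⟨f, ⟨hf, hf0⟩, ?_⟩
  rw [← erase_insert h0f, insert_zero_tailSet hf0]
  simp [f, e, image_orderEmbOfFin_univ, erase_insert h0S]

theorem sum_tailSet_eq_sum_powersetCard {M : Type*} [AddCommMonoid M] (g : Finset ℕ → M) :
    ∑ f ∈ univ.filter (fun f : Fin (k + 1) → Fin (m + 1) => StrictMono f ∧ f 0 = 0),
      g (tailSet f) = ∑ S ∈ powersetCard k (Icc 1 m), g S := by
  refine sum_nbij tailSet (fun f hf => ?_) (fun f hf g hg => ?_) (fun S hS => ?_) (fun _ _ => rfl)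
  · obtain ⟨hmono, h0⟩ := (mem_filter.mp hf).2
    exact mem_powersetCard.mpr ⟨tailSet_subset_Icc hmono h0, card_tailSet hmono⟩
  · simp only [coe_filter, mem_univ, true_and] at hf hg
    exact tailSet_injOn hf hg
  · obtain ⟨hsub, hcard⟩ := mem_powersetCard.mp hS
    obtain ⟨f, hf, rfl⟩ := exists_tailSet_eq hsub hcard
    exact ⟨f, by simpa using hf, rfl⟩

theorem StrictMono.succ_sub_castSucc_eq_one_iff {g : Fin (k + 1) → ℕ}
    (hg : StrictMono g) (s : Fin k) :
    g s.succ - g s.castSucc = 1 ↔ g s.succ - 1 ∈ univ.image g := by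
  have hlt : g s.castSucc < g s.succ := hg s.castSucc_lt_succ
  refine ⟨fun h => mem_image.mpr ⟨s.castSucc, mem_univ _, by omega⟩, fun h => ?_⟩
  obtain ⟨t, -, ht⟩ := mem_image.mp h
  have hts : t ≤ s.castSucc := Fin.le_castSucc_iff.mpr (hg.lt_iff_lt.mp (by omega))
  have := hg.monotone hts
  omega

end Subsets

section Toda

variable {R : Type*} [CommRing R] (P : ℕ → Rˣ) (Q : ℕ → R) (y : R)

/-- `S` stands for `{i_1, …, i_k}`; the inserted `0` is `i_0`. -/
noncomputable def todaWeight (S : Finset ℕ) : R :=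
  ∏ i ∈ S, y * ((P i * (P (i - 1))⁻¹ : Rˣ) : R) *
    (if i - 1 ∈ insert 0 S then 1 else 1 - Q (i - 1))

noncomputable def todaSubsetSum (m : ℕ) : R :=
  ∑ S ∈ (Icc 1 m).powerset, todaWeight P Q y S

theorem todaTerm_mul_pow {m k : ℕ} {f : Fin (k + 1) → Fin (m + 1)} (hf : StrictMono f)
    (h0 : f 0 = 0) : todaTerm P Q f * y ^ k = todaWeight P Q y (tailSet f) := by
  have hg : StrictMono fun i => (f i : ℕ) := Fin.val_strictMono.comp hf
  rw [todaWeight, insert_zero_tailSet h0, tailSet,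
    prod_image fun a _ b _ h => Fin.succ_injective k (hf.injective (Fin.ext h)),
    todaTerm, ← Fin.prod_const, ← prod_mul_distrib]
  refine prod_congr rfl fun s _ => ?_
  simp only [← hg.succ_sub_castSucc_eq_one_iff s]
  split_ifs <;> ring

theorem todaT_mul_pow (m k : ℕ) :
    todaT P Q m k * y ^ k = ∑ S ∈ powersetCard k (Icc 1 m), todaWeight P Q y S := by
  rw [todaT, sum_mul, ← sum_tailSet_eq_sum_powersetCard]
  refine sum_congr rfl fun f hf => ?_
  obtain ⟨hmono, h0⟩ := (mem_filter.mp hf).2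
  exact todaTerm_mul_pow P Q y hmono h0

theorem todaPoly_eq_todaSubsetSum (m : ℕ) : todaPoly P Q m y = todaSubsetSum P Q y m := by
  simp only [todaPoly, todaT_mul_pow, todaSubsetSum, sum_powerset, Nat.card_Icc,
    Nat.add_sub_cancel]

theorem todaWeight_insert {m : ℕ} {S : Finset ℕ} (hS : S ⊆ Icc 1 (m + 1)) :
    todaWeight P Q y (insert (m + 2) S) = todaWeight P Q y S *
      (y * ((P (m + 2) * (P (m + 1))⁻¹ : Rˣ) : R) *
        (if m + 1 ∈ S then 1 else 1 - Q (m + 1))) := by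
  have hm : m + 2 ∉ S := fun h => by simpa using hS h
  rw [todaWeight, prod_insert hm, mul_comm, todaWeight]
  congr 1
  · refine prod_congr rfl fun i hi => ?_
    have : i - 1 ≠ m + 2 := by have := mem_Icc.mp (hS hi); omega
    simp [mem_insert, this]
  · simp

theorem todaSubsetSum_zero : todaSubsetSum P Q y 0 = 1 := by
  simp [todaSubsetSum, todaWeight]

theorem todaSubsetSum_one :
    todaSubsetSum P Q y 1 = 1 + y * ((P 1 * (P 0)⁻¹ : Rˣ) : R) := by
  rw [todaSubsetSum, Icc_self, ← insert_empty_eq, sum_powerset_insert (notMem_empty 1)]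
  simp [todaWeight]

theorem todaSubsetSum_add_two (m : ℕ) :
    todaSubsetSum P Q y (m + 2) =
      (1 + y * ((P (m + 2) * (P (m + 1))⁻¹ : Rˣ) : R)) * todaSubsetSum P Q y (m + 1) -
        y * ((P (m + 2) * (P (m + 1))⁻¹ : Rˣ) : R) * Q (m + 1) * todaSubsetSum P Q y m := by
  set c := y * ((P (m + 2) * (P (m + 1))⁻¹ : Rˣ) : R)
  have hIcc (n : ℕ) : Icc 1 (n + 1) = insert (n + 1) (Icc 1 n) :=
    (insert_Icc_right_eq_Icc_add_one (by omega)).symm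
  have hlast : ∑ S ∈ (Icc 1 (m + 1)).powerset,
      todaWeight P Q y S * (c * if m + 1 ∈ S then 1 else 1 - Q (m + 1)) =
      c * todaSubsetSum P Q y (m + 1) - c * Q (m + 1) * todaSubsetSum P Q y m := by
    have hm : m + 1 ∉ Icc 1 m := by simp
    simp only [todaSubsetSum, hIcc m, sum_powerset_insert hm, mem_insert_self, if_true]
    rw [sum_congr rfl fun S hS => by rw [if_neg (notMem_of_mem_powerset_of_notMem hS hm)]]
    rw [← sum_mul, ← sum_mul]
    ring
  rw [todaSubsetSum, hIcc (m + 1), sum_powerset_insert (by simp),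
    sum_congr rfl fun S hS => todaWeight_insert P Q y (mem_powerset.mp hS),
    hlast, ← todaSubsetSum]
  ring

end Toda

theorem todaPoly_eq_triDet_general {R : Type*} [CommRing R] (P : ℕ → Rˣ) (Q : ℕ → R)
    (y : R) (n : ℕ) :
    todaPoly P Q n y =
      triDet n (fun j => 1 + y * ((P (j + 1) * (P j)⁻¹ : Rˣ) : R))
        (fun j => y * ((P (j + 1) * (P j)⁻¹ : Rˣ) : R) * Q j) := by
  rw [todaPoly_eq_todaSubsetSum]
  induction n using Nat.twoStepInduction with
  | zero => rw [todaSubsetSum_zero, triDet_zero]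
  | one => rw [todaSubsetSum_one, triDet_one]
  | more m ih₀ ih₁ => rw [todaSubsetSum_add_two, triDet_add_two, ih₀, ih₁]

/-- `T^{(n)}(y)` equals the tridiagonal determinant
`D(1 + y·P_1/P_0, …, 1 + y·P_n/P_{n-1}; y·(P_2/P_1)·Q_1, …, y·(P_n/P_{n-1})·Q_{n-1})`,
where `P_0 = 1` and `Q_0 = 0`. -/
theorem todaPoly_eq_triDet {R : Type*} [CommRing R] (P : ℕ → Rˣ) (Q : ℕ → R)
    (hP0 : P 0 = 1) (hQ0 : Q 0 = 0) (y : R) (n : ℕ) :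
    todaPoly P Q n y =
      triDet n (fun j => 1 + y * ((P (j + 1) * (P j)⁻¹ : Rˣ) : R))
        (fun j => y * ((P (j + 1) * (P j)⁻¹ : Rˣ) : R) * Q j) :=
  todaPoly_eq_triDet_general P Q y n
end

section
/- Let B be a commutative ring, n ≥ 1, and Q_1, …, Q_{n-1} ∈ B such that each 1 − Q_j is invertible; set Q_0 = 0. Let d_1, …, d_n ∈ B, and let s_{k,p} ∈ B be given for −1 ≤ k ≤ n and all integers p, with s_{k,p} = 0 whenever p < 0 or p > max(k,0), and s_{-1,0} = s_{0,0} = 1. Suppose that for each k = 1, …, n the identity (Σ_p s_{k-1,p} y^p)·(1 + y d_k) = Σ_p s_{k,p} y^p − y·(Q_{k-1}/(1−Q_{k-1}))·d_k·(Σ_p s_{k-1,p} y^p − Σ_p s_{k-2,p} y^p) holds in the polynomial ring B[y]. Then for all 0 ≤ p ≤ k ≤ n one has s_{k,p} = Σ_{J ⊆ {1,…,k}, |J| = p} ( ∏_{1 ≤ j ≤ k−1, j ∈ J and j+1 ∈ J} (1 − Q_j)^{-1} ) · ∏_{j ∈ J} d_j. -/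
/-!
Both sides satisfy the same recursion in `k`. Comparing coefficients of `y ^ (p + 1)` in the
Whitney relation and using `Q_k u_k = u_k - 1` for `u_k = (1 - Q_k)⁻¹` gives
`s_{k+1,p+1} = s_{k,p+1} + d_{k+1} (u_k s_{k,p} - (u_k - 1) s_{k-1,p})`.
On the combinatorial side, split the subsets `J ⊆ {1, …, k+1}` according to whether they
contain `k + 1`; adding `k + 1` creates the new adjacent pair `(k, k+1)`, hence the factor
`u_k`, exactly when `k ∈ J`, and the subsets of `{1, …, k}` avoiding `k` are counted by
level `k - 1`. Together with the common initial values `1` for `p = 0` and `0` for `p > k`, this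
determines both sides.
-/

open Polynomial Finset

theorem Finset.sum_powersetCard_succ_insert {α M : Type*} [DecidableEq α] [AddCommMonoid M]
    {a : α} {s : Finset α} (ha : a ∉ s) (n : ℕ) (f : Finset α → M) :
    ∑ t ∈ powersetCard (n + 1) (insert a s), f t =
      ∑ t ∈ powersetCard (n + 1) s, f t + ∑ t ∈ powersetCard n s, f (insert a t) := by
  have hdisj : Disjoint (powersetCard (n + 1) s) ((powersetCard n s).image (insert a)) := by
    refine disjoint_left.2 fun t ht ht' => ?_
    obtain ⟨t', -, rfl⟩ := mem_image.1 ht'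
    exact ha ((mem_powersetCard.1 ht).1 (mem_insert_self a t'))
  have hinj : Set.InjOn (insert a) (powersetCard n s : Set (Finset α)) := fun t ht t' ht' h => by
    have hat : a ∉ t := fun h => ha ((mem_powersetCard.1 ht).1 h)
    have hat' : a ∉ t' := fun h => ha ((mem_powersetCard.1 ht').1 h)
    rw [← erase_insert hat, ← erase_insert hat', h]
  rw [powersetCard_succ_insert ha, sum_union hdisj, sum_image hinj]

theorem Finset.filter_notMem_powersetCard {α : Type*} [DecidableEq α] (a : α) (s : Finset α)
    (n : ℕ) : (powersetCard n s).filter (a ∉ ·) = powersetCard n (s.erase a) := by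
  ext t
  simp only [mem_filter, mem_powersetCard, subset_erase]
  tauto

section

variable {B : Type*} [CommRing B]

theorem Ring.mul_inverse_one_sub {q : B} (h : IsUnit (1 - q)) :
    q * Ring.inverse (1 - q) = Ring.inverse (1 - q) - 1 := by
  linear_combination -Ring.mul_inverse_cancel _ h

namespace Polynomial

variable {P R P' : B[X]} {a b : B}

theorem eq_add_X_mul_of_mul_one_add_X_mul_C_eq (h : P * (1 + X * C a) = R - X * C b * (P - P')) :
    R = P + X * (C a * P + C b * (P - P')) := by
  linear_combination -h

theorem coeff_zero_eq_of_mul_one_add_X_mul_C_eq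
    (h : P * (1 + X * C a) = R - X * C b * (P - P')) : R.coeff 0 = P.coeff 0 := by
  simp [eq_add_X_mul_of_mul_one_add_X_mul_C_eq h]

theorem coeff_succ_eq_of_mul_one_add_X_mul_C_eq
    (h : P * (1 + X * C a) = R - X * C b * (P - P')) (p : ℕ) :
    R.coeff (p + 1) = P.coeff (p + 1) + a * P.coeff p + b * (P.coeff p - P'.coeff p) := by
  rw [eq_add_X_mul_of_mul_one_add_X_mul_C_eq h, coeff_add, coeff_X_mul, coeff_add, coeff_C_mul,
    coeff_C_mul, coeff_sub, add_assoc]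

end Polynomial

section WedgeSum

variable (w d : ℕ → B)

def subsetWeight (J : Finset ℕ) : B := (∏ j ∈ J with j + 1 ∈ J, w j) * ∏ j ∈ J, d j

def wedgeSum (k p : ℕ) : B := ∑ J ∈ powersetCard p (Icc 1 k), subsetWeight w d J

theorem subsetWeight_insert_succ {J : Finset ℕ} {k : ℕ} (hk1 : k + 1 ∉ J)
    (hk2 : k + 2 ∉ J) :
    subsetWeight w d (insert (k + 1) J) =
      d (k + 1) * ((if k ∈ J then w k else 1) * subsetWeight w d J) := by
  have hkJ : k ∉ J.filter (· + 1 ∈ J) := by simp [hk1]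
  have hpairs : (insert (k + 1) J).filter (· + 1 ∈ insert (k + 1) J) =
      if k ∈ J then insert k (J.filter (· + 1 ∈ J)) else J.filter (· + 1 ∈ J) := by
    ext j
    split_ifs <;> simp only [mem_filter, mem_insert] <;> grind
  rw [subsetWeight, subsetWeight, hpairs, prod_insert hk1]
  split_ifs
  · rw [prod_insert hkJ]
    ring
  · ring

theorem wedgeSum_zero_right (k : ℕ) : wedgeSum w d k 0 = 1 := by
  simp [wedgeSum, subsetWeight]

theorem wedgeSum_eq_zero_of_lt {k p : ℕ} (h : k < p) : wedgeSum w d k p = 0 := by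
  rw [wedgeSum, powersetCard_eq_empty.2 (by simpa using h), sum_empty]

theorem wedgeSum_succ_succ (k p : ℕ) :
    wedgeSum w d (k + 1) (p + 1) = wedgeSum w d k (p + 1) +
      d (k + 1) * (w k * wedgeSum w d k p - (w k - 1) * wedgeSum w d (k - 1) p) := by
  have hk : k + 1 ∉ Icc 1 k := by simp
  have hIcc : insert (k + 1) (Icc 1 k) = Icc 1 (k + 1) := by ext; simp; omega
  have hErase : (Icc 1 k).erase k = Icc 1 (k - 1) := by ext; simp; omega
  have hInsert : ∀ J ∈ powersetCard p (Icc 1 k), subsetWeight w d (insert (k + 1) J) =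
      d (k + 1) * (subsetWeight w d J + (w k - 1) * if k ∈ J then subsetWeight w d J else 0) := by
    intro J hJ
    have hJ := (mem_powersetCard.1 hJ).1
    rw [subsetWeight_insert_succ w d (fun h => by simpa using hJ h) (fun h => by simpa using hJ h)]
    split_ifs <;> ring
  have hWith : ∑ J ∈ powersetCard p (Icc 1 k) with k ∈ J, subsetWeight w d J =
      wedgeSum w d k p - wedgeSum w d (k - 1) p := by
    rw [eq_sub_iff_add_eq, wedgeSum, wedgeSum, ← hErase, ← filter_notMem_powersetCard,
      sum_filter_add_sum_filter_not]
  rw [wedgeSum, ← hIcc, sum_powersetCard_succ_insert hk, sum_congr rfl hInsert, ← mul_sum,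
    sum_add_distrib, ← mul_sum, ← sum_filter, hWith, ← wedgeSum, ← wedgeSum]
  ring

theorem eq_wedgeSum_of_recursion (N : ℕ) (f : ℕ → ℕ → B) (hzero : ∀ k ≤ N, f k 0 = 1)
    (hlt : ∀ k ≤ N, ∀ p, k < p → f k p = 0)
    (hsucc : ∀ k p, p ≤ k → k + 1 ≤ N →
      f (k + 1) (p + 1) = f k (p + 1) + d (k + 1) * (w k * f k p - (w k - 1) * f (k - 1) p)) :
    ∀ k ≤ N, ∀ p, f k p = wedgeSum w d k p := by
  intro k
  induction k using Nat.strong_induction_on with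
  | _ k ih =>
    intro hk p
    rcases p with _ | p
    · rw [hzero k hk, wedgeSum_zero_right]
    rcases lt_or_ge k (p + 1) with hkp | hpk
    · rw [hlt k hk _ hkp, wedgeSum_eq_zero_of_lt w d hkp]
    obtain ⟨k, rfl⟩ : ∃ k', k = k' + 1 := ⟨k - 1, by omega⟩
    rw [hsucc k p (by omega) hk, wedgeSum_succ_succ, ih k (by omega) (by omega),
      ih k (by omega) (by omega), ih (k - 1) (by omega) (by omega)]

theorem wedgeSum_eq_sum_filter_Icc (k p : ℕ) :
    wedgeSum w d k p = ∑ J ∈ powersetCard p (Icc 1 k),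
      (∏ j ∈ (Icc 1 (k - 1)).filter (fun j => j ∈ J ∧ j + 1 ∈ J), w j) *
        ∏ j ∈ J, d j := by
  refine sum_congr rfl fun J hJ => ?_
  have hJ := (mem_powersetCard.1 hJ).1
  rw [subsetWeight]
  congr 1
  refine prod_congr ?_ fun _ _ => rfl
  ext j
  simp only [mem_filter, mem_Icc, iff_and_self]
  rintro ⟨hj, hj1⟩
  have := mem_Icc.1 (hJ hj)
  have := mem_Icc.1 (hJ hj1)
  omega

end WedgeSum

/-- `λ_y` of a class whose `p`-th exterior power is `a p`, truncated in degree `n`. -/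
noncomputable def lambdaPoly (n : ℕ) (a : ℤ → B) : B[X] :=
  ∑ p ∈ range (n + 1), C (a p) * X ^ p

section WhitneyRelation

variable {n : ℕ} {Q d : ℕ → B} {s : ℤ → ℤ → B}

theorem coeff_lambdaPoly (a : ℤ → B) {p : ℕ} (hp : p ≤ n) :
    (lambdaPoly n a).coeff p = a p := by
  simp [lambdaPoly, coeff_C_mul, coeff_X_pow, Nat.lt_succ_of_le hp]

theorem whitney_coeff_zero (hs0 : s 0 0 = 1)
    (hrec : ∀ k : ℕ, 1 ≤ k → k ≤ n →
      lambdaPoly n (s (k - 1)) * (1 + X * C (d k)) = lambdaPoly n (s k) -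
        X * C (Q (k - 1) * Ring.inverse (1 - Q (k - 1)) * d k) *
          (lambdaPoly n (s (k - 1)) - lambdaPoly n (s (k - 2)))) :
    ∀ k ≤ n, s k 0 = 1 := by
  intro k hk
  induction k with
  | zero => exact hs0
  | succ k ih =>
    have h := coeff_zero_eq_of_mul_one_add_X_mul_C_eq (hrec (k + 1) (by omega) hk)
    rw [coeff_lambdaPoly _ (by omega), coeff_lambdaPoly _ (by omega)] at h
    push_cast at h ⊢
    rw [h, add_sub_cancel_right]
    exact ih (by omega)

theorem whitney_coeff_succ (hQ0 : Q 0 = 0)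
    (hrec : ∀ k : ℕ, 1 ≤ k → k ≤ n →
      lambdaPoly n (s (k - 1)) * (1 + X * C (d k)) = lambdaPoly n (s k) -
        X * C (Q (k - 1) * Ring.inverse (1 - Q (k - 1)) * d k) *
          (lambdaPoly n (s (k - 1)) - lambdaPoly n (s (k - 2))))
    {k p : ℕ} (hQk : IsUnit (1 - Q k)) (hk : k + 1 ≤ n) (hp : p + 1 ≤ n) :
    s ↑(k + 1) ↑(p + 1) = s k ↑(p + 1) + d (k + 1) *
      (Ring.inverse (1 - Q k) * s k p - (Ring.inverse (1 - Q k) - 1) * s ↑(k - 1) p) := by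
  have h := coeff_succ_eq_of_mul_one_add_X_mul_C_eq (hrec (k + 1) (by omega) hk) p
  rw [coeff_lambdaPoly _ hp, coeff_lambdaPoly _ hp, coeff_lambdaPoly _ (by omega),
    coeff_lambdaPoly _ (by omega)] at h
  -- for `k = 0` the coefficient `s (-1) p` is killed by `Ring.inverse (1 - Q 0) - 1 = 0`
  have hprev : (Ring.inverse (1 - Q k) - 1) * s (↑(k + 1) - 2) p =
      (Ring.inverse (1 - Q k) - 1) * s ↑(k - 1) p := by
    rcases k with _ | k
    · simp [hQ0]
    · congr 2
      push_cast
      ring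
  push_cast at h hprev ⊢
  rw [h, add_sub_cancel_right, ← hprev]
  linear_combination d (k + 1) * (s k p - s (↑k + 1 - 2) p) * Ring.mul_inverse_one_sub hQk

end WhitneyRelation

end

theorem whitney_wedge_formula_general {B : Type*} [CommRing B] (n : ℕ)
    (Q : ℕ → B) (hQ0 : Q 0 = 0)
    (hQunit : ∀ j : ℕ, 1 ≤ j → j ≤ n - 1 → IsUnit (1 - Q j))
    (d : ℕ → B) (s : ℤ → ℤ → B)
    (hvanish : ∀ k p : ℤ, -1 ≤ k → k ≤ n → (p < 0 ∨ p > max k 0) → s k p = 0)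
    (hs0 : s 0 0 = 1)
    (hrec : ∀ k : ℕ, 1 ≤ k → k ≤ n →
      (∑ p ∈ Finset.range (n + 1), C (s ((k : ℤ) - 1) p) * X ^ p) * (1 + X * C (d k)) =
        (∑ p ∈ Finset.range (n + 1), C (s (k : ℤ) p) * X ^ p)
          - X * C (Q (k - 1) * Ring.inverse (1 - Q (k - 1)) * d k) *
            ((∑ p ∈ Finset.range (n + 1), C (s ((k : ℤ) - 1) p) * X ^ p)
              - (∑ p ∈ Finset.range (n + 1), C (s ((k : ℤ) - 2) p) * X ^ p))) :
    ∀ k p : ℕ, p ≤ k → k ≤ n →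
      s k p =
        ∑ J ∈ Finset.powersetCard p (Finset.Icc 1 k),
          (∏ j ∈ (Finset.Icc 1 (k - 1)).filter (fun j => j ∈ J ∧ j + 1 ∈ J),
              Ring.inverse (1 - Q j)) * ∏ j ∈ J, d j := by
  have hunit : ∀ k < n, IsUnit (1 - Q k) := by
    intro k hk
    rcases k.eq_zero_or_pos with rfl | hk0
    · simp [hQ0]
    · exact hQunit k hk0 (by omega)
  have hlt : ∀ k ≤ n, ∀ p : ℕ, k < p → s k p = 0 := fun k hk p hkp =>
    hvanish k p (by omega) (by exact_mod_cast hk) (Or.inr (by simp; omega))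
  intro k p _ hk
  rw [← wedgeSum_eq_sum_filter_Icc]
  refine eq_wedgeSum_of_recursion _ d n (fun k p => s k p) (whitney_coeff_zero hs0 hrec) hlt
    (fun k p _ hkn => whitney_coeff_succ hQ0 hrec (hunit k (by omega)) hkn (by omega)) k hk p

/-- Abstract form of the quantum K Whitney relations for the complete flag
variety `Fl(n)`: if `s k p` (modelling `∧^p S_k`) vanishes for `p < 0` or
`p > max k 0`, satisfies `s (-1) 0 = s 0 0 = 1`, and for each `k = 1, …, n`
the polynomial identity
`(Σ_p s_{k-1,p} y^p)(1 + y d_k)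
  = Σ_p s_{k,p} y^p - y (Q_{k-1}/(1-Q_{k-1})) d_k (Σ_p s_{k-1,p} y^p - Σ_p s_{k-2,p} y^p)`
holds in `B[y]`, then for all `0 ≤ p ≤ k ≤ n`,
`s_{k,p} = Σ_{J ⊆ {1,…,k}, |J| = p} (∏_{1 ≤ j ≤ k-1, j ∈ J, j+1 ∈ J} (1-Q_j)⁻¹) ∏_{j ∈ J} d_j`. -/
theorem whitney_wedge_formula {B : Type*} [CommRing B] (n : ℕ) (hn : 1 ≤ n)
    (Q : ℕ → B) (hQ0 : Q 0 = 0)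
    (hQunit : ∀ j : ℕ, 1 ≤ j → j ≤ n - 1 → IsUnit (1 - Q j))
    (d : ℕ → B) (s : ℤ → ℤ → B)
    (hvanish : ∀ k p : ℤ, -1 ≤ k → k ≤ n → (p < 0 ∨ p > max k 0) → s k p = 0)
    (hs0 : s 0 0 = 1) (hsneg : s (-1) 0 = 1)
    (hrec : ∀ k : ℕ, 1 ≤ k → k ≤ n →
      (∑ p ∈ Finset.range (n + 1), C (s ((k : ℤ) - 1) p) * X ^ p) * (1 + X * C (d k)) =
        (∑ p ∈ Finset.range (n + 1), C (s (k : ℤ) p) * X ^ p)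
          - X * C (Q (k - 1) * Ring.inverse (1 - Q (k - 1)) * d k) *
            ((∑ p ∈ Finset.range (n + 1), C (s ((k : ℤ) - 1) p) * X ^ p)
              - (∑ p ∈ Finset.range (n + 1), C (s ((k : ℤ) - 2) p) * X ^ p))) :
    ∀ k p : ℕ, p ≤ k → k ≤ n →
      s k p =
        ∑ J ∈ Finset.powersetCard p (Finset.Icc 1 k),
          (∏ j ∈ (Finset.Icc 1 (k - 1)).filter (fun j => j ∈ J ∧ j + 1 ∈ J),
              Ring.inverse (1 - Q j)) * ∏ j ∈ J, d j :=
  whitney_wedge_formula_general n Q hQ0 hQunit d s hvanish hs0 hrec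
end
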